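/- Let x be a vector in F_q^n of Hamming weight w. If gcd(n, w) = 1, then the i-th cyclic shift of x differs from x for all i = 1, ..., n-1. -/

import Mathlib

/-!
The periods of `x` form a subgroup `P` of `ℤ/n`. Translation by `P` preserves the support
of `x`, so the support is a union of cosets of `P` and `|P|` divides the weight; by Lagrange
`|P|` also divides `n`. Hence `|P| = 1`, and no `i` with `0 < i < n` is a period.
-/

open Fin.NatCast Function

/-- The right cyclic shift on `Fin n → F`: `(σ x) j = x (j - 1)`. -/
def cyclicShift {F : Type*} {n : ℕ} [NeZero n] (x : Fin n → F) : Fin n → F :=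
  fun j => x (j - 1)

/-- The Hamming weight: number of nonzero coordinates. -/
def hWeight {F : Type*} [Zero F] [DecidableEq F] {n : ℕ} (x : Fin n → F) : ℕ :=
  (Finset.univ.filter (fun j => x j ≠ 0)).card

section Periods

variable {G F : Type*} [AddGroup G]

theorem AddSubgroup.card_dvd_card_of_add_mem (H : AddSubgroup G) {S : Set G}
    (hS : ∀ s ∈ S, ∀ h ∈ H, s + h ∈ S) : Nat.card H ∣ Nat.card S := by
  have hsat : QuotientAddGroup.mk ⁻¹' (QuotientAddGroup.mk '' S : Set (G ⧸ H)) = S := by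
    refine Set.Subset.antisymm ?_ (Set.subset_preimage_image _ _)
    rintro a ⟨s, hs, hsa⟩
    simpa using hS s hs _ (QuotientAddGroup.eq.mp hsa)
  rw [← hsat, Nat.card_congr (QuotientAddGroup.preimageMkEquivAddSubgroupProdSet H _),
    Nat.card_prod]
  exact dvd_mul_right _ _

def periodAddSubgroup (x : G → F) : AddSubgroup G where
  carrier := {c | Periodic x c}
  zero_mem' := fun j => by rw [add_zero]
  add_mem' := fun ha hb => ha.add_period hb
  neg_mem' := fun ha => ha.neg

theorem mem_periodAddSubgroup {x : G → F} {c : G} :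
    c ∈ periodAddSubgroup x ↔ Periodic x c :=
  Iff.rfl

theorem card_periodAddSubgroup_dvd_card_support [Zero F] (x : G → F) :
    Nat.card (periodAddSubgroup x) ∣ Nat.card (support x) :=
  (periodAddSubgroup x).card_dvd_card_of_add_mem fun s hs c hc => by
    rwa [mem_support, mem_periodAddSubgroup.mp hc s]

end Periods

theorem hWeight_eq_card_support {F : Type*} {n : ℕ} [Zero F] [DecidableEq F] (x : Fin n → F) :
    hWeight x = Nat.card (support x) := by
  rw [hWeight, ← Set.ncard_coe_finset, Nat.card_coe_set_eq]
  congr 1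
  ext j
  simp

section CyclicShift

variable {F : Type*} {n : ℕ} [NeZero n]

theorem cyclicShift_iterate_apply (i : ℕ) (x : Fin n → F) (j : Fin n) :
    cyclicShift^[i] x j = x (j - i) := by
  induction i generalizing x with
  | zero => simp
  | succ i ih =>
    rw [iterate_succ_apply, ih, cyclicShift, Nat.cast_succ, sub_sub]

theorem cyclicShift_iterate_eq_self_iff {i : ℕ} {x : Fin n → F} :
    cyclicShift^[i] x = x ↔ Periodic x (i : Fin n) := by
  refine ⟨fun h j => ?_, fun h => funext fun j => ?_⟩
  · rw [← congrFun h (j + i), cyclicShift_iterate_apply, add_sub_cancel_right]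
  · rw [cyclicShift_iterate_apply, ← h (j - i), sub_add_cancel]

end CyclicShift

/-- if `gcd(n, w) = 1` where `w` is the weight of `x`, then
`σ^i(x) ≠ x` for all `i = 1, …, n-1`. -/
theorem shift_ne_of_gcd_weight_one {F : Type*} [Field F] [DecidableEq F]
    {n : ℕ} [NeZero n] (x : Fin n → F)
    (h : Nat.gcd n (hWeight x) = 1) :
    ∀ i : ℕ, 1 ≤ i → i ≤ n - 1 → cyclicShift^[i] x ≠ x := by
  intro i hi hin hfix
  have hcard : Nat.card (periodAddSubgroup x) = 1 := by
    refine Nat.eq_one_of_dvd_one (h ▸ Nat.dvd_gcd ?_ ?_)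
    · simpa using AddSubgroup.card_addSubgroup_dvd_card (periodAddSubgroup x)
    · rw [hWeight_eq_card_support]
      exact card_periodAddSubgroup_dvd_card_support x
  have hi0 : (i : Fin n) = 0 := by
    have hper := mem_periodAddSubgroup.mpr (cyclicShift_iterate_eq_self_iff.mp hfix)
    rwa [AddSubgroup.card_eq_one.mp hcard, AddSubgroup.mem_bot] at hper
  have := Nat.le_of_dvd (by omega) ((Fin.natCast_eq_zero).mp hi0)
  omega
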